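/- In an undirected graph on a finite vertex set V, a vertex x is essential if and only if its neighborhood N(x) is properly contained in the intersection of all vertex neighborhoods that properly contain it: N(x) ⊊ ⋂ {N(y) | y ∈ V, N(x) ⊊ N(y)}. -/
import Mathlib


/-- The dual of a subset `X` of the vertex set: all vertices adjacent to every element of `X`. -/
def dual {V : Type*} (Adj : V → V → Prop) (X : Set V) : Set V := {y | ∀ x ∈ X, Adj x y}

/-- A subset is closed if it equals its double dual. -/
def Closed {V : Type*} (Adj : V → V → Prop) (X : Set V) : Prop := dual Adj (dual Adj X) = X

/-- The neighborhood of a vertex. -/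
def nbhd {V : Type*} (Adj : V → V → Prop) (x : V) : Set V := {y | Adj x y}

/-- A vertex is essential if its neighborhood is a completely meet-irreducible element of
the lattice of closed sets: every family of closed sets whose intersection equals the
neighborhood contains it. -/
def Essential {V : Type*} (Adj : V → V → Prop) (x : V) : Prop :=
  ∀ F : Set (Set V), (∀ X ∈ F, Closed Adj X) → ⋂₀ F = nbhd Adj x → nbhd Adj x ∈ F


lemma dual_anti {V : Type*} {Adj : V → V → Prop} {X Y : Set V} (h : X ⊆ Y) :
    dual Adj Y ⊆ dual Adj X := fun _ hy a ha => hy a (h ha)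

lemma subset_dual_dual {V : Type*} {Adj : V → V → Prop} (hs : Symmetric Adj) (X : Set V) :
    X ⊆ dual Adj (dual Adj X) := fun y hy a ha => hs (ha y hy)

lemma nbhd_eq_dual {V : Type*} (Adj : V → V → Prop) (x : V) :
    nbhd Adj x = dual Adj {x} := by
  ext y; simp [nbhd, dual]

lemma closed_dual {V : Type*} {Adj : V → V → Prop} (hs : Symmetric Adj) (X : Set V) :
    Closed Adj (dual Adj X) :=
  Set.Subset.antisymm (dual_anti (subset_dual_dual hs X)) (subset_dual_dual hs (dual Adj X))

lemma closed_nbhd {V : Type*} {Adj : V → V → Prop} (hs : Symmetric Adj) (x : V) :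
    Closed Adj (nbhd Adj x) := by
  rw [nbhd_eq_dual]; exact closed_dual hs _

theorem stmt_16 {V : Type*} [Fintype V] (Adj : V → V → Prop) (hs : Symmetric Adj)
    (x : V) :
    Essential Adj x ↔
      nbhd Adj x ⊂ ⋂ y ∈ {y : V | nbhd Adj x ⊂ nbhd Adj y}, nbhd Adj y := by
  set M := ⋂ y ∈ {y : V | nbhd Adj x ⊂ nbhd Adj y}, nbhd Adj y with hM
  have hNM : nbhd Adj x ⊆ M := by
    intro a ha
    simp only [hM, Set.mem_iInter]
    exact fun y hy => hy.1 ha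
  constructor
  · intro hE
    refine ⟨hNM, fun hsub => ?_⟩
    set F : Set (Set V) := (fun y => nbhd Adj y) '' {y : V | nbhd Adj x ⊂ nbhd Adj y} with hF
    have hint : ⋂₀ F = nbhd Adj x := by
      apply Set.Subset.antisymm
      · intro a ha
        apply hsub
        simp only [hM, Set.mem_iInter]
        intro y hy
        exact ha _ ⟨y, hy, rfl⟩
      · intro a ha X hX
        obtain ⟨y, hy, rfl⟩ := hX
        exact hy.1 ha
    have := hE F (by rintro X ⟨y, _, rfl⟩; exact closed_nbhd hs y) hint
    obtain ⟨y, hy, hyx⟩ := this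
    exact hy.ne hyx.symm
  · intro hss F hcl hint
    by_contra hnot
    refine hss.2 ?_
    rw [← hint]
    intro a ha X hX
    have hXcl := hcl X hX
    have hNX : nbhd Adj x ⊆ X := hint ▸ Set.sInter_subset_of_mem hX
    have hXsub : ∀ z ∈ dual Adj X, X ⊆ nbhd Adj z := fun z hz b hb => hs (hz b hb)
    rw [← hXcl]
    intro z hz
    have hXz : X ⊆ nbhd Adj z := hXsub z hz
    have hxz : nbhd Adj x ⊂ nbhd Adj z := by
      refine ⟨hNX.trans hXz, fun hsub2 => ?_⟩
      apply hnot
      have : X = nbhd Adj x := Set.Subset.antisymm (hXz.trans hsub2) hNX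
      rwa [← this]
    have : a ∈ nbhd Adj z := by
      have := Set.mem_iInter₂.mp (hM ▸ ha) z hxz
      exact this
    exact this
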